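/- Let n be odd, T an n × n bibifix-free matrix, and T' ∈ ψ(T). Then T' is not bibifix-free if and only if the top-left ((n+1)/2) × ((n+1)/2) submatrix of T' equals the bottom-right ((n+1)/2) × ((n+1)/2) submatrix of T', and moreover in that case this common submatrix is itself bibifix-free. -/
import Mathlib


def topLeft {α : Type*} {n : ℕ} (T : Matrix (Fin n) (Fin n) α) (r : ℕ) (h : r ≤ n) :
    Matrix (Fin r) (Fin r) α :=
  fun a b => T (Fin.castLE h a) (Fin.castLE h b)

def botRight {α : Type*} {n : ℕ} (T : Matrix (Fin n) (Fin n) α) (r : ℕ) (h : r ≤ n) :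
    Matrix (Fin r) (Fin r) α :=
  fun a b => T ⟨n - r + a, by have := a.isLt; omega⟩ ⟨n - r + b, by have := b.isLt; omega⟩

def BibifixFree {α : Type*} {n : ℕ} (T : Matrix (Fin n) (Fin n) α) : Prop :=
  ∀ (r : ℕ) (_ : 1 ≤ r) (h2 : r < n), topLeft T r h2.le ≠ botRight T r h2.le

def insIdx (n : ℕ) (i : Fin (n + 1)) (h : (i : ℕ) ≠ n / 2) : Fin n :=
  if hl : (i : ℕ) < n / 2 then ⟨i, by have := Nat.div_le_self n 2; omega⟩
  else ⟨(i : ℕ) - 1, by have := i.isLt; omega⟩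

def InPsi {α : Type*} {n : ℕ} (T : Matrix (Fin n) (Fin n) α)
    (T' : Matrix (Fin (n + 1)) (Fin (n + 1)) α) : Prop :=
  ∀ (i j : Fin (n + 1)) (hi : (i : ℕ) ≠ n / 2) (hj : (j : ℕ) ≠ n / 2),
    T' i j = T (insIdx n i hi) (insIdx n j hj)

/-- auxiliary: congruence for matrix entries given by nat values. -/
lemma entry_congr {α : Type*} {m : ℕ} (M : Matrix (Fin m) (Fin m) α) {p p' q q' : ℕ}
    (hp : p < m) (hp' : p' < m) (hq : q < m) (hq' : q' < m)
    (h1 : p = p') (h2 : q = q') : M ⟨p, hp⟩ ⟨q, hq⟩ = M ⟨p', hp'⟩ ⟨q', hq'⟩ := by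
  subst h1; subst h2; rfl

lemma insIdx_mk_lt {n p : ℕ} (hpn : p < n + 1) (h : p ≠ n / 2) (hp : p < n / 2) :
    insIdx n ⟨p, hpn⟩ h = ⟨p, by have := Nat.div_le_self n 2; omega⟩ := by
  unfold insIdx
  rw [dif_pos (show ((⟨p, hpn⟩ : Fin (n + 1)) : ℕ) < n / 2 from hp)]

lemma insIdx_mk_gt {n p : ℕ} (hpn : p < n + 1) (h : p ≠ n / 2) (hp : n / 2 < p) :
    insIdx n ⟨p, hpn⟩ h = ⟨p - 1, by omega⟩ := by
  unfold insIdx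
  rw [dif_neg (show ¬ ((⟨p, hpn⟩ : Fin (n + 1)) : ℕ) < n / 2 from Nat.not_lt.mpr hp.le)]

/-- existence of a residue `r'` in `[1, s]` with `s ∣ N - r'`. -/
lemma exists_residue (s N : ℕ) (hs : 1 ≤ s) (hN : s ≤ N) :
    ∃ r', 1 ≤ r' ∧ r' ≤ s ∧ s ∣ (N - r') := by
  have h := Nat.div_add_mod (N - 1) s
  have hlt : (N - 1) % s < s := Nat.mod_lt _ (by omega)
  exact ⟨(N - 1) % s + 1, by omega, by omega, (N - 1) / s, by omega⟩

theorem stmt_7 {α : Type*} {n : ℕ} (hn : Odd n) (T : Matrix (Fin n) (Fin n) α)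
    (hT : BibifixFree T) (T' : Matrix (Fin (n + 1)) (Fin (n + 1)) α) (hT' : InPsi T T') :
    (¬ BibifixFree T' ↔
        topLeft T' ((n + 1) / 2) (Nat.div_le_self (n + 1) 2) =
          botRight T' ((n + 1) / 2) (Nat.div_le_self (n + 1) 2)) ∧
    (topLeft T' ((n + 1) / 2) (Nat.div_le_self (n + 1) 2) =
        botRight T' ((n + 1) / 2) (Nat.div_le_self (n + 1) 2) →
      BibifixFree (topLeft T' ((n + 1) / 2) (Nat.div_le_self (n + 1) 2))) := by
  obtain ⟨k, hk⟩ := hn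
  have hk2 : n / 2 = k := by omega
  have hdiv : (n + 1) / 2 = k + 1 := by omega
  -- entrywise consequences of `InPsi`
  have Tlow : ∀ (p q : ℕ) (hp : p < k) (hq : q < k),
      T' ⟨p, by omega⟩ ⟨q, by omega⟩ = T ⟨p, by omega⟩ ⟨q, by omega⟩ := by
    intro p q hp hq
    rw [hT' ⟨p, by omega⟩ ⟨q, by omega⟩ (show p ≠ n / 2 by omega) (show q ≠ n / 2 by omega),
      insIdx_mk_lt _ _ (by omega), insIdx_mk_lt _ _ (by omega)]
  have Thigh : ∀ (p q : ℕ) (hp : k < p) (hq : k < q) (hp2 : p ≤ n) (hq2 : q ≤ n),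
      T' ⟨p, by omega⟩ ⟨q, by omega⟩ = T ⟨p - 1, by omega⟩ ⟨q - 1, by omega⟩ := by
    intro p q hp hq hp2 hq2
    rw [hT' ⟨p, by omega⟩ ⟨q, by omega⟩ (show p ≠ n / 2 by omega) (show q ≠ n / 2 by omega),
      insIdx_mk_gt _ _ (by omega), insIdx_mk_gt _ _ (by omega)]
  -- main step : any failure of bibifix-freeness of T' gives equality of half-size blocks
  have hmain : ∀ (r : ℕ), 1 ≤ r → ∀ (h2 : r < n + 1),
      topLeft T' r h2.le = botRight T' r h2.le →
      topLeft T' ((n + 1) / 2) (Nat.div_le_self (n + 1) 2) =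
        botRight T' ((n + 1) / 2) (Nat.div_le_self (n + 1) 2) := by
    intro r h1 h2 heq
    have hper : ∀ (x y : ℕ) (hx : x < r) (hy : y < r),
        T' ⟨x, by omega⟩ ⟨y, by omega⟩ =
          T' ⟨n + 1 - r + x, by omega⟩ ⟨n + 1 - r + y, by omega⟩ := by
      intro x y hx hy
      exact congrFun (congrFun heq ⟨x, hx⟩) ⟨y, hy⟩
    rcases lt_trichotomy r (k + 1) with hr | hr | hr
    · -- r ≤ k : contradicts bibifix-freeness of T
      exfalso
      refine hT r h1 (by omega) ?_
      funext a b
      obtain ⟨a, ha⟩ := a; obtain ⟨b, hb⟩ := b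
      calc T ⟨a, by omega⟩ ⟨b, by omega⟩
          = T' ⟨a, by omega⟩ ⟨b, by omega⟩ := (Tlow a b (by omega) (by omega)).symm
        _ = T' ⟨n + 1 - r + a, by omega⟩ ⟨n + 1 - r + b, by omega⟩ := hper a b ha hb
        _ = T ⟨n + 1 - r + a - 1, by omega⟩ ⟨n + 1 - r + b - 1, by omega⟩ :=
            Thigh _ _ (by omega) (by omega) (by omega) (by omega)
        _ = T ⟨n - r + a, by omega⟩ ⟨n - r + b, by omega⟩ :=
            entry_congr T _ _ _ _ (by omega) (by omega)
    · -- r = k + 1 : this is the conclusion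
      have hr' : r = (n + 1) / 2 := by omega
      subst hr'
      exact heq
    · -- r ≥ k + 2 : contradicts bibifix-freeness of T, via periodicity
      exfalso
      have chain : ∀ d, (n + 1 - r) ∣ d → ∀ (x y : ℕ) (hx : x + d ≤ n) (hy : y + d ≤ n),
          T' ⟨x, by omega⟩ ⟨y, by omega⟩ = T' ⟨x + d, by omega⟩ ⟨y + d, by omega⟩ := by
        intro d
        induction d using Nat.strong_induction_on with
        | _ d ih =>
          intro hdvd x y hx hy
          rcases Nat.eq_zero_or_pos d with hd0 | hdpos
          · subst hd0; exact entry_congr T' _ _ _ _ (by omega) (by omega)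
          · have hsd : n + 1 - r ≤ d := Nat.le_of_dvd hdpos hdvd
            have h1' := hper x y (by omega) (by omega)
            have h2' := ih (d - (n + 1 - r)) (by omega) (Nat.dvd_sub hdvd dvd_rfl)
              (n + 1 - r + x) (n + 1 - r + y) (by omega) (by omega)
            exact h1'.trans (h2'.trans (entry_congr T' _ _ _ _ (by omega) (by omega)))
      obtain ⟨r', hr1, hr2, hdvd⟩ :=
        exists_residue (n + 1 - r) (n + 1) (by omega) (by omega)
      refine hT r' hr1 (by omega) ?_
      funext a b
      obtain ⟨a, ha⟩ := a; obtain ⟨b, hb⟩ := b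
      calc T ⟨a, by omega⟩ ⟨b, by omega⟩
          = T' ⟨a, by omega⟩ ⟨b, by omega⟩ := (Tlow a b (by omega) (by omega)).symm
        _ = T' ⟨a + (n + 1 - r'), by omega⟩ ⟨b + (n + 1 - r'), by omega⟩ :=
            chain _ hdvd a b (by omega) (by omega)
        _ = T ⟨a + (n + 1 - r') - 1, by omega⟩ ⟨b + (n + 1 - r') - 1, by omega⟩ :=
            Thigh _ _ (by omega) (by omega) (by omega) (by omega)
        _ = T ⟨n - r' + a, by omega⟩ ⟨n - r' + b, by omega⟩ :=
            entry_congr T _ _ _ _ (by omega) (by omega)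
  refine ⟨⟨fun hnb => ?_, fun heq hbf => ?_⟩, fun heq => ?_⟩
  · unfold BibifixFree at hnb
    push_neg at hnb
    obtain ⟨r, h1, h2, heq⟩ := hnb
    exact hmain r h1 h2 heq
  · exact hbf ((n + 1) / 2) (by omega) (by omega) heq
  · -- the common half-size block is bibifix-free
    have hper2 : ∀ (x y : ℕ) (hx : x < (n + 1) / 2) (hy : y < (n + 1) / 2),
        T' ⟨x, by omega⟩ ⟨y, by omega⟩ =
          T' ⟨n + 1 - (n + 1) / 2 + x, by omega⟩ ⟨n + 1 - (n + 1) / 2 + y, by omega⟩ := by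
      intro x y hx hy
      exact congrFun (congrFun heq ⟨x, hx⟩) ⟨y, hy⟩
    intro r h1 h2 hcon
    have hcon' : ∀ (x y : ℕ) (hx : x < r) (hy : y < r),
        T' ⟨x, by omega⟩ ⟨y, by omega⟩ =
          T' ⟨(n + 1) / 2 - r + x, by omega⟩ ⟨(n + 1) / 2 - r + y, by omega⟩ := by
      intro x y hx hy
      exact congrFun (congrFun hcon ⟨x, hx⟩) ⟨y, hy⟩
    refine hT r h1 (by omega) ?_
    funext a b
    obtain ⟨a, ha⟩ := a; obtain ⟨b, hb⟩ := b
    calc T ⟨a, by omega⟩ ⟨b, by omega⟩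
        = T' ⟨a, by omega⟩ ⟨b, by omega⟩ := (Tlow a b (by omega) (by omega)).symm
      _ = T' ⟨(n + 1) / 2 - r + a, by omega⟩ ⟨(n + 1) / 2 - r + b, by omega⟩ :=
          hcon' a b ha hb
      _ = T' ⟨n + 1 - (n + 1) / 2 + ((n + 1) / 2 - r + a), by omega⟩
            ⟨n + 1 - (n + 1) / 2 + ((n + 1) / 2 - r + b), by omega⟩ :=
          hper2 _ _ (by omega) (by omega)
      _ = T' ⟨n + 1 - r + a, by omega⟩ ⟨n + 1 - r + b, by omega⟩ :=
          entry_congr T' _ _ _ _ (by omega) (by omega)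
      _ = T ⟨n + 1 - r + a - 1, by omega⟩ ⟨n + 1 - r + b - 1, by omega⟩ :=
          Thigh _ _ (by omega) (by omega) (by omega) (by omega)
      _ = T ⟨n - r + a, by omega⟩ ⟨n - r + b, by omega⟩ :=
          entry_congr T _ _ _ _ (by omega) (by omega)
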